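/- arXiv:2010.05166 — 5 statements merged into one kernel-verified Lean document; each statement's English description precedes it below -/
import Mathlib

section
/- Let F be a real constant and p in the open interval (0,1), and set q = p/(1 - F*p + F*p^2). If F <= 1, then for every p in (0,1) it holds that 1 - F*p + F*p^2 > 0 and 0 < q <= 1. If F > 1, then (1 - F*p + F*p^2 > 0 and 0 < q <= 1) holds if and only if p <= 1/F. -/
/-- Case analysis for validity of the adversary's equilibrium probability
`q = p/(1 - F*p + F*p^2)`: if `F ≤ 1` it is valid for all `p ∈ (0,1)`; if `F > 1`
it is valid iff `p ≤ 1/F`. -/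
theorem stmt_6 (F : ℝ) :
    (F ≤ 1 → ∀ p ∈ Set.Ioo (0 : ℝ) 1,
        0 < 1 - F * p + F * p ^ 2 ∧
        0 < p / (1 - F * p + F * p ^ 2) ∧ p / (1 - F * p + F * p ^ 2) ≤ 1) ∧
    (1 < F → ∀ p ∈ Set.Ioo (0 : ℝ) 1,
        ((0 < 1 - F * p + F * p ^ 2 ∧
          0 < p / (1 - F * p + F * p ^ 2) ∧ p / (1 - F * p + F * p ^ 2) ≤ 1) ↔ p ≤ 1 / F)) := by
  constructor
  · rintro hF p ⟨hp0, hp1⟩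
    have hD : 0 < 1 - F * p + F * p ^ 2 := by
      nlinarith [mul_pos hp0 (sub_pos.mpr hp1)]
    refine ⟨hD, div_pos hp0 hD, ?_⟩
    rw [div_le_one hD]
    nlinarith [mul_pos hp0 (sub_pos.mpr hp1)]
  · rintro hF p ⟨hp0, hp1⟩
    have hF0 : (0:ℝ) < F := by linarith
    constructor
    · rintro ⟨hD, -, hq⟩
      rw [div_le_one hD] at hq
      rw [le_div_iff₀ hF0]
      nlinarith [sub_pos.mpr hp1]
    · intro hpF
      have hFp : F * p ≤ 1 := by
        rw [le_div_iff₀ hF0] at hpF; linarith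
      have hD : 0 < 1 - F * p + F * p ^ 2 := by
        nlinarith [mul_pos hp0 (sub_pos.mpr hp1), mul_pos hF0 (pow_pos hp0 2)]
      refine ⟨hD, div_pos hp0 hD, ?_⟩
      rw [div_le_one hD]
      nlinarith [sub_pos.mpr hp1]
end

section
/- Let F be a real constant, q in the open interval (0,1), and suppose p* in the open interval (0,1) satisfies q*(1 - F*p* + F*(p*)^2) = p*. Then p* is the unique global minimizer on (0,1) of the function p ↦ -q*log(p) - (1-q)*log(1-p) + F*q*p; that is, for every p in (0,1) with p ≠ p*, the value at p is strictly larger than the value at p*. -/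
open Real Set

/-- If `q ∈ (0,1)`, `p* ∈ (0,1)` and `q*(1 - F*p* + F*p*^2) = p*`, then `p*` is the unique
global minimizer on `(0,1)` of `p ↦ -q*log p - (1-q)*log(1-p) + F*q*p`. -/
theorem stmt_9 (F q pstar : ℝ) (hq : q ∈ Set.Ioo (0 : ℝ) 1)
    (hps : pstar ∈ Set.Ioo (0 : ℝ) 1)
    (heq : q * (1 - F * pstar + F * pstar ^ 2) = pstar) :
    ∀ p ∈ Set.Ioo (0 : ℝ) 1, p ≠ pstar →
      -q * Real.log pstar - (1 - q) * Real.log (1 - pstar) + F * q * pstar <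
        -q * Real.log p - (1 - q) * Real.log (1 - p) + F * q * p := by
  obtain ⟨hq0, hq1⟩ := hq
  obtain ⟨hp0, hp1⟩ := hps
  set J : ℝ → ℝ := fun p => -q * Real.log p - (1 - q) * Real.log (1 - p) + F * q * p with hJ
  set g : ℝ → ℝ := fun p => -q / p + (1 - q) / (1 - p) + F * q with hg
  have hderiv : ∀ x ∈ Set.Ioo (0:ℝ) 1, HasDerivAt J (g x) x := by
    intro x hx
    obtain ⟨hx0, hx1⟩ := hx
    have h1x : (0:ℝ) < 1 - x := by linarith
    have hlog : HasDerivAt Real.log x⁻¹ x := Real.hasDerivAt_log (ne_of_gt hx0)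
    have hlog2 : HasDerivAt (fun p : ℝ => Real.log (1 - p)) ((1 - x)⁻¹ * (0 - 1)) x := by
      exact (Real.hasDerivAt_log (ne_of_gt h1x)).comp x
        ((hasDerivAt_const x (1:ℝ)).sub (hasDerivAt_id x))
    have : HasDerivAt J (-q * x⁻¹ - (1 - q) * ((1 - x)⁻¹ * (0 - 1)) + F * q * 1) x := by
      exact ((hlog.const_mul (-q)).sub (hlog2.const_mul (1 - q))).add
        ((hasDerivAt_id x).const_mul (F * q))
    convert this using 1
    simp only [hg]
    field_simp
    ring
  have hg0 : g pstar = 0 := by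
    have hp0' : pstar ≠ 0 := ne_of_gt hp0
    have h1p : (1:ℝ) - pstar ≠ 0 := by intro h; linarith [h]
    simp only [hg]
    field_simp
    ring
    nlinarith [heq]
  have hcont : ∀ s : Set ℝ, s ⊆ Set.Ioo (0:ℝ) 1 → ContinuousOn J s := by
    intro s hs x hx
    exact (hderiv x (hs hx)).continuousAt.continuousWithinAt
  intro p hp hne
  obtain ⟨hpp0, hpp1⟩ := hp
  rcases lt_or_gt_of_ne hne with hlt | hgt
  · -- p < pstar : J strictly decreasing on [p, pstar]
    have hsub : Set.Icc p pstar ⊆ Set.Ioo (0:ℝ) 1 := fun x hx =>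
      ⟨lt_of_lt_of_le hpp0 hx.1, lt_of_le_of_lt hx.2 hp1⟩
    have hanti : StrictAntiOn J (Set.Icc p pstar) := by
      apply strictAntiOn_of_deriv_neg (convex_Icc p pstar) (hcont _ hsub)
      intro x hx
      rw [interior_Icc] at hx
      obtain ⟨hx1, hx2⟩ := hx
      have hxmem : x ∈ Set.Ioo (0:ℝ) 1 := ⟨lt_trans hpp0 hx1, lt_trans hx2 hp1⟩
      rw [(hderiv x hxmem).deriv]
      -- g x < 0 for x < pstar
      have h1 : -q / x < -q / pstar := by
        rw [div_lt_div_iff₀ hxmem.1 hp0]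
        nlinarith
      have h2 : (1 - q) / (1 - x) < (1 - q) / (1 - pstar) := by
        apply div_lt_div_of_pos_left (by linarith) (by linarith) (by linarith)
      have := hg0
      simp only [hg] at this ⊢
      linarith
    exact hanti (Set.left_mem_Icc.mpr (le_of_lt hlt)) (Set.right_mem_Icc.mpr (le_of_lt hlt)) hlt
  · -- pstar < p : J strictly increasing on [pstar, p]
    have hsub : Set.Icc pstar p ⊆ Set.Ioo (0:ℝ) 1 := fun x hx =>
      ⟨lt_of_lt_of_le hp0 hx.1, lt_of_le_of_lt hx.2 hpp1⟩
    have hmono : StrictMonoOn J (Set.Icc pstar p) := by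
      apply strictMonoOn_of_deriv_pos (convex_Icc pstar p) (hcont _ hsub)
      intro x hx
      rw [interior_Icc] at hx
      obtain ⟨hx1, hx2⟩ := hx
      have hxmem : x ∈ Set.Ioo (0:ℝ) 1 := ⟨lt_trans hp0 hx1, lt_trans hx2 hpp1⟩
      rw [(hderiv x hxmem).deriv]
      have h1 : -q / pstar < -q / x := by
        rw [div_lt_div_iff₀ hp0 hxmem.1]
        nlinarith
      have h2 : (1 - q) / (1 - pstar) < (1 - q) / (1 - x) := by
        apply div_lt_div_of_pos_left (by linarith) (by linarith) (by linarith)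
      have := hg0
      simp only [hg] at this ⊢
      linarith
    exact hmono (Set.left_mem_Icc.mpr (le_of_lt hgt)) (Set.right_mem_Icc.mpr (le_of_lt hgt)) hgt
end

section
/- Let α be a nonempty finite type and let C be a convex set of probability vectors on α. Suppose q* ∈ C has q* i > 0 for every i and maximizes Shannon entropy over C, i.e., H(q) <= H(q*) for all q ∈ C. Then for every q ∈ C, the cross entropy satisfies -∑_i q i * log(q* i) <= H(q*). -/
/-! Entropy `q ↦ ∑ i, negMulLog (q i)` is differentiable at the full-support point `q*`, with
gradient `-log q* - 1`. Since `q*` maximizes it over the convex set `C`, its derivative in every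
feasible direction `q - q*` is nonpositive. As `q - q*` has total mass zero, the constant `-1` drops
out, and what remains is exactly `CE(q, q*) ≤ H(q*)`. -/

open Real

theorem hasFDerivAt_sum_negMulLog {α : Type*} [Fintype α] {p : α → ℝ} (hp : ∀ i, p i ≠ 0) :
    HasFDerivAt (fun q : α → ℝ => ∑ i, negMulLog (q i))
      (∑ i, (-log (p i) - 1) • ContinuousLinearMap.proj (R := ℝ) (φ := fun _ : α => ℝ) i) p :=
  HasFDerivAt.fun_sum fun i _ =>
    (hasDerivAt_negMulLog (hp i)).comp_hasFDerivAt (f := fun q : α → ℝ => q i) p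
      (hasFDerivAt_apply i p)

theorem IsMaxOn.hasFDerivAt_sub_nonpos_of_convex {E : Type*} [NormedAddCommGroup E]
    [NormedSpace ℝ E] {C : Set E} {f : E → ℝ} {f' : E →L[ℝ] ℝ} {x y : E}
    (hmax : IsMaxOn f C x) (hf : HasFDerivAt f f' x) (hC : Convex ℝ C) (hx : x ∈ C)
    (hy : y ∈ C) : f' (y - x) ≤ 0 :=
  hmax.localize.hasFDerivWithinAt_nonpos hf.hasFDerivWithinAt
    (sub_mem_posTangentConeAt_of_segment_subset (hC.segment_subset hx hy))

theorem stmt_13_general {α : Type*} [Fintype α] (C : Set (α → ℝ))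
    (hC : Convex ℝ C)
    (hprob : ∀ q ∈ C, (∀ i, 0 ≤ q i) ∧ ∑ i, q i = 1)
    (qstar : α → ℝ) (hmem : qstar ∈ C) (hpos : ∀ i, 0 < qstar i)
    (hmax : ∀ q ∈ C,
      (-∑ i, q i * Real.log (q i)) ≤ (-∑ i, qstar i * Real.log (qstar i))) :
    ∀ q ∈ C,
      (-∑ i, q i * Real.log (qstar i)) ≤ (-∑ i, qstar i * Real.log (qstar i)) := by
  intro q hq
  have hentropy : IsMaxOn (fun q : α → ℝ => ∑ i, negMulLog (q i)) C qstar :=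
    isMaxOn_iff.mpr fun q hq => by
      simpa only [negMulLog_eq_neg, Finset.sum_neg_distrib] using hmax q hq
  have hderiv := hentropy.hasFDerivAt_sub_nonpos_of_convex
    (hasFDerivAt_sum_negMulLog fun i => (hpos i).ne') hC hmem hq
  have hmass : ∑ i, q i = ∑ i, qstar i := by rw [(hprob q hq).2, (hprob qstar hmem).2]
  have hexpand : ∑ i, (-log (qstar i) - 1) * (q i - qstar i) =
      -∑ i, q i * log (qstar i) + ∑ i, qstar i * log (qstar i) - (∑ i, q i - ∑ i, qstar i) := by
    simp only [← Finset.sum_sub_distrib, ← Finset.sum_neg_distrib, ← Finset.sum_add_distrib]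
    exact Finset.sum_congr rfl fun i _ => by ring
  simp only [FunLike.coe_sum, Finset.sum_apply, FunLike.coe_smul,
    Pi.smul_apply, ContinuousLinearMap.proj_apply, Pi.sub_apply, smul_eq_mul] at hderiv
  linarith

/-- Equalizer property of the maximum-entropy element: if `q*` is a full-support
probability vector in a convex set `C` of probability vectors maximizing Shannon
entropy over `C`, then the cross entropy of every `q ∈ C` relative to `q*`
is at most the entropy of `q*`. -/
theorem stmt_13 {α : Type*} [Fintype α] [Nonempty α] (C : Set (α → ℝ))
    (hC : Convex ℝ C)
    (hprob : ∀ q ∈ C, (∀ i, 0 ≤ q i) ∧ ∑ i, q i = 1)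
    (qstar : α → ℝ) (hmem : qstar ∈ C) (hpos : ∀ i, 0 < qstar i)
    (hmax : ∀ q ∈ C,
      (-∑ i, q i * Real.log (q i)) ≤ (-∑ i, qstar i * Real.log (qstar i))) :
    ∀ q ∈ C,
      (-∑ i, q i * Real.log (qstar i)) ≤ (-∑ i, qstar i * Real.log (qstar i)) :=
  stmt_13_general C hC hprob qstar hmem hpos hmax
end

section
/- Let α be a nonempty finite type and let C be a convex set of probability vectors on α. Suppose q* ∈ C has q* i > 0 for every i and maximizes Shannon entropy over C. Then: (i) for every probability vector p on α with p i > 0 for all i, there exists q ∈ C with -∑_i q i * log(p i) >= H(q*); and (ii) for every q ∈ C, -∑_i q i * log(q* i) <= H(q*). Consequently the minimax value min over full-support p of sup over q ∈ C of cross entropy CE(q,p) equals H(q*), attained at p = q*. -/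
/-- Cross entropy of `q` relative to `p`: `CE(q,p) = -∑ i, q i * log (p i)`. -/
noncomputable def crossEnt {α : Type*} [Fintype α] (q p : α → ℝ) : ℝ :=
  -∑ i, q i * Real.log (p i)

/-- Shannon entropy `H(q) = -∑ i, q i * log (q i)` (with `0 * log 0 = 0` automatic). -/
noncomputable def shEnt {α : Type*} [Fintype α] (q : α → ℝ) : ℝ :=
  -∑ i, q i * Real.log (q i)

/-!
Gibbs' inequality `H(q*) ≤ CE(q*, p)` gives (i) with the witness `q = q*`. For (ii), `q*` maximizes
the entropy on the convex set `C`, so the derivative of `H` at `q*` in the feasible direction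
`q - q*` is nonpositive; since `q` and `q*` have the same total mass, that directional derivative
`-∑ i, (log q*ᵢ + 1) (qᵢ - q*ᵢ)` is exactly `CE(q, q*) - H(q*)`. The supremum of `CE(·, p)` over `C`
is finite because `C` lies in the compact standard simplex, and (i), (ii) then identify the
minimax value.
-/

open Real Finset

section

variable {α : Type*} [Fintype α]

lemma mul_log_sub_mul_log_le_sub {p q : ℝ} (hp : 0 < p) (hq : 0 ≤ q) :
    q * log p - q * log q ≤ p - q := by
  rcases hq.eq_or_lt with rfl | hq
  · simpa using hp.le
  calc q * log p - q * log q = q * log (p / q) := by rw [log_div hp.ne' hq.ne']; ring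
    _ ≤ q * (p / q - 1) := mul_le_mul_of_nonneg_left (log_le_sub_one_of_pos (by positivity)) hq.le
    _ = p - q := by field_simp

theorem shEnt_le_crossEnt {q p : α → ℝ} (hq : q ∈ stdSimplex ℝ α)
    (hp : ∀ i, 0 < p i) (hp1 : ∑ i, p i = 1) : shEnt q ≤ crossEnt q p := by
  have := sum_le_sum fun i (_ : i ∈ univ) => mul_log_sub_mul_log_le_sub (hp i) (hq.1 i)
  rw [sum_sub_distrib, sum_sub_distrib, hp1, hq.2, sub_self] at this
  unfold shEnt crossEnt
  linarith

theorem hasFDerivAt_shEnt {q : α → ℝ} (hq : ∀ i, q i ≠ 0) :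
    HasFDerivAt shEnt
      (-∑ i, (log (q i) + 1) • ContinuousLinearMap.proj (R := ℝ) (φ := fun _ : α => ℝ) i) q := by
  refine (HasFDerivAt.fun_sum (u := univ) (A := fun i (x : α → ℝ) => x i * log (x i))
    fun i _ => ?_).neg
  exact HasDerivAt.comp_hasFDerivAt (f := fun x : α → ℝ => x i) q (hasDerivAt_mul_log (hq i))
    (hasFDerivAt_apply i q)

theorem crossEnt_le_shEnt_of_isMaxOn {C : Set (α → ℝ)}
    (hC : Convex ℝ C) {qstar q : α → ℝ} (hmem : qstar ∈ C) (hq : q ∈ C) (hpos : ∀ i, qstar i ≠ 0)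
    (hmax : IsMaxOn shEnt C qstar) (hsum : ∑ i, q i = ∑ i, qstar i) :
    crossEnt q qstar ≤ shEnt qstar := by
  have := hmax.localize.hasFDerivWithinAt_nonpos (hasFDerivAt_shEnt hpos).hasFDerivWithinAt
    (sub_mem_posTangentConeAt_of_segment_subset (hC.segment_subset hmem hq))
  simp only [neg_apply, _root_.sum_apply, smul_apply, ContinuousLinearMap.proj_apply, Pi.sub_apply,
    smul_eq_mul] at this
  have hexpand : ∑ i, (log (qstar i) + 1) * (q i - qstar i) =
      (∑ i, q i * log (qstar i) - ∑ i, qstar i * log (qstar i)) + (∑ i, q i - ∑ i, qstar i) := by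
    rw [← sum_sub_distrib, ← sum_sub_distrib, ← sum_add_distrib]
    exact sum_congr rfl fun i _ => by ring
  rw [hexpand, hsum, sub_self, add_zero] at this
  unfold crossEnt shEnt
  linarith

theorem bddAbove_crossEnt_image (p : α → ℝ) :
    BddAbove ((crossEnt · p) '' stdSimplex ℝ α) :=
  (isCompact_stdSimplex ℝ α).bddAbove_image (by unfold crossEnt; fun_prop)

end

theorem stmt_14_general {α : Type*} [Fintype α] (C : Set (α → ℝ))
    (hC : Convex ℝ C)
    (hprob : ∀ q ∈ C, (∀ i, 0 ≤ q i) ∧ ∑ i, q i = 1)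
    (qstar : α → ℝ) (hmem : qstar ∈ C) (hpos : ∀ i, 0 < qstar i)
    (hmax : ∀ q ∈ C, shEnt q ≤ shEnt qstar) :
    (∀ p : α → ℝ, (∀ i, 0 < p i) → ∑ i, p i = 1 →
        ∃ q ∈ C, shEnt qstar ≤ crossEnt q p) ∧
    (∀ q ∈ C, crossEnt q qstar ≤ shEnt qstar) ∧
    IsLeast { v : ℝ | ∃ p : α → ℝ, (∀ i, 0 < p i) ∧ (∑ i, p i = 1) ∧
        v = sSup { w : ℝ | ∃ q ∈ C, w = crossEnt q p } } (shEnt qstar) ∧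
    sSup { w : ℝ | ∃ q ∈ C, w = crossEnt q qstar } = shEnt qstar := by
  have hsimplex : C ⊆ stdSimplex ℝ α := hprob
  have lower (p : α → ℝ) (hp : ∀ i, 0 < p i) (hp1 : ∑ i, p i = 1) :
      shEnt qstar ≤ crossEnt qstar p :=
    shEnt_le_crossEnt (hsimplex hmem) hp hp1
  have upper (q : α → ℝ) (hq : q ∈ C) : crossEnt q qstar ≤ shEnt qstar :=
    crossEnt_le_shEnt_of_isMaxOn hC hmem hq (fun i => (hpos i).ne') hmax
      ((hprob q hq).2.trans (hprob qstar hmem).2.symm)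
  have bdd (p : α → ℝ) : BddAbove { w : ℝ | ∃ q ∈ C, w = crossEnt q p } :=
    (bddAbove_crossEnt_image p).mono <| by
      rintro _ ⟨q, hq, rfl⟩
      exact ⟨q, hsimplex hq, rfl⟩
  have hsup : sSup { w : ℝ | ∃ q ∈ C, w = crossEnt q qstar } = shEnt qstar :=
    IsGreatest.csSup_eq ⟨⟨qstar, hmem, rfl⟩, by rintro _ ⟨q, hq, rfl⟩; exact upper q hq⟩
  refine ⟨fun p hp hp1 => ⟨qstar, hmem, lower p hp hp1⟩, upper,
    ⟨⟨qstar, hpos, (hprob qstar hmem).2, hsup.symm⟩, ?_⟩, hsup⟩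
  rintro _ ⟨p, hp, hp1, rfl⟩
  exact (lower p hp hp1).trans (le_csSup (bdd p) ⟨qstar, hmem, rfl⟩)

/-- Finite form of the robust log-loss minimax duality: if `q*` is a full-support
maximum-entropy element of a convex set `C` of probability vectors, then
(i) for every full-support probability vector `p` some `q ∈ C` has cross entropy
at least `H(q*)`; (ii) every `q ∈ C` has cross entropy relative to `q*` at most `H(q*)`;
consequently the minimax value `min_p sup_{q ∈ C} CE(q,p)` equals `H(q*)`,
attained at `p = q*`. -/
theorem stmt_14 {α : Type*} [Fintype α] [Nonempty α] (C : Set (α → ℝ))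
    (hC : Convex ℝ C)
    (hprob : ∀ q ∈ C, (∀ i, 0 ≤ q i) ∧ ∑ i, q i = 1)
    (qstar : α → ℝ) (hmem : qstar ∈ C) (hpos : ∀ i, 0 < qstar i)
    (hmax : ∀ q ∈ C, shEnt q ≤ shEnt qstar) :
    (∀ p : α → ℝ, (∀ i, 0 < p i) → ∑ i, p i = 1 →
        ∃ q ∈ C, shEnt qstar ≤ crossEnt q p) ∧
    (∀ q ∈ C, crossEnt q qstar ≤ shEnt qstar) ∧
    IsLeast { v : ℝ | ∃ p : α → ℝ, (∀ i, 0 < p i) ∧ (∑ i, p i = 1) ∧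
        v = sSup { w : ℝ | ∃ q ∈ C, w = crossEnt q p } } (shEnt qstar) ∧
    sSup { w : ℝ | ∃ q ∈ C, w = crossEnt q qstar } = shEnt qstar :=
  stmt_14_general C hC hprob qstar hmem hpos hmax
end

section
/- Let X and α be nonempty finite types, d a natural number, φ : X → α → (Fin d → ℝ) a feature map, w_src : X → ℝ with w_src x >= 0, w_trg : X → ℝ with w_trg x > 0, and θ ∈ (Fin d → ℝ). Define the ratio-scaled Gibbs conditional Q_θ(y|x) = exp((w_src x / w_trg x) * ⟨θ, φ x y⟩) / ∑_{y'} exp((w_src x / w_trg x) * ⟨θ, φ x y'⟩). Then for every family Q of probability vectors Q(·|x) on α (one for each x ∈ X) satisfying the source-weighted moment-matching condition ∑_x w_src x • (∑_y Q(y|x) • φ x y) = ∑_x w_src x • (∑_y Q_θ(y|x) • φ x y), the target-weighted conditional entropy satisfies ∑_x w_trg x * H(Q(·|x)) <= ∑_x w_trg x * H(Q_θ(·|x)). -/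
private lemma gibbs_aux {α : Type*} [Fintype α] (p q : α → ℝ)
    (hp : ∀ y, 0 ≤ p y) (hq : ∀ y, 0 < q y)
    (hp1 : ∑ y, p y = 1) (hq1 : ∑ y, q y = 1) :
    ∑ y, p y * Real.log (q y) ≤ ∑ y, p y * Real.log (p y) := by
  have key : ∀ y : α, p y * Real.log (q y) - p y * Real.log (p y) ≤ q y - p y := by
    intro y
    rcases eq_or_lt_of_le (hp y) with h0 | h0
    · simp [← h0]; exact (hq y).le
    · have hlog := Real.log_le_sub_one_of_pos (div_pos (hq y) h0)
      rw [Real.log_div (hq y).ne' h0.ne'] at hlog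
      have h2 : p y * (Real.log (q y) - Real.log (p y)) ≤ p y * (q y / p y - 1) :=
        mul_le_mul_of_nonneg_left hlog h0.le
      have h3 : p y * (q y / p y) = q y := mul_div_cancel₀ _ h0.ne'
      nlinarith [h2, h3]
  have hsum : ∑ y, (p y * Real.log (q y) - p y * Real.log (p y)) ≤ ∑ y, (q y - p y) :=
    Finset.sum_le_sum fun y _ => key y
  simp only [Finset.sum_sub_distrib, hp1, hq1] at hsum
  linarith

/-- Finite-sample optimality of the robust covariate-shift predictor's parametric form:
the density-ratio-scaled Gibbs conditional
`Q_θ(y|x) = exp((w_src x / w_trg x) * ⟨θ, φ x y⟩) / Z_x`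
maximizes target-weighted conditional entropy among all conditionals matching
source-weighted feature expectations. -/
theorem stmt_16 {X α : Type*} [Fintype X] [Nonempty X] [Fintype α] [Nonempty α]
    (d : ℕ) (φ : X → α → Fin d → ℝ) (wsrc wtrg : X → ℝ)
    (hws : ∀ x, 0 ≤ wsrc x) (hwt : ∀ x, 0 < wtrg x) (θ : Fin d → ℝ)
    (Qθ : X → α → ℝ)
    (hQθ : ∀ x y, Qθ x y =
      Real.exp ((wsrc x / wtrg x) * ∑ j, θ j * φ x y j) /
        ∑ y', Real.exp ((wsrc x / wtrg x) * ∑ j, θ j * φ x y' j)) :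
    ∀ Q : X → α → ℝ, (∀ x y, 0 ≤ Q x y) → (∀ x, ∑ y, Q x y = 1) →
      (∑ x, wsrc x • ∑ y, Q x y • φ x y) = (∑ x, wsrc x • ∑ y, Qθ x y • φ x y) →
      (∑ x, wtrg x * (-∑ y, Q x y * Real.log (Q x y))) ≤
        (∑ x, wtrg x * (-∑ y, Qθ x y * Real.log (Qθ x y))) := by
  intro Q hQ0 hQ1 hmom
  set c : X → ℝ := fun x => wsrc x / wtrg x with hc
  set S : X → α → ℝ := fun x y => ∑ j, θ j * φ x y j with hS
  set Z : X → ℝ := fun x => ∑ y', Real.exp (c x * S x y') with hZ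
  have hZpos : ∀ x, 0 < Z x := fun x =>
    Finset.sum_pos (fun y _ => Real.exp_pos _) Finset.univ_nonempty
  have hQθpos : ∀ x y, 0 < Qθ x y := by
    intro x y; rw [hQθ x y]; exact div_pos (Real.exp_pos _) (hZpos x)
  have hQθ1 : ∀ x, ∑ y, Qθ x y = 1 := by
    intro x
    simp only [hQθ x]
    rw [← Finset.sum_div, div_self (hZpos x).ne']
  have hlogQθ : ∀ x y, Real.log (Qθ x y) = c x * S x y - Real.log (Z x) := by
    intro x y
    rw [hQθ x y, Real.log_div (Real.exp_pos _).ne' (hZpos x).ne', Real.log_exp]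
  -- cross entropy identity for any conditional prob R
  have hcross : ∀ (R : X → α → ℝ), (∀ x, ∑ y, R x y = 1) →
      ∀ x, wtrg x * (-∑ y, R x y * Real.log (Qθ x y)) =
        wtrg x * Real.log (Z x) - wsrc x * ∑ y, R x y * S x y := by
    intro R hR1 x
    have h1 : ∑ y, R x y * Real.log (Qθ x y)
        = (c x * ∑ y, R x y * S x y) - Real.log (Z x) := by
      simp only [hlogQθ, mul_sub]
      rw [Finset.sum_sub_distrib, ← Finset.sum_mul, hR1 x, one_mul, Finset.mul_sum]
      congr 1; apply Finset.sum_congr rfl; intro y _; ring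
    rw [h1]
    have h2 : wtrg x * c x = wsrc x := by
      rw [hc, mul_comm]; exact div_mul_cancel₀ _ (hwt x).ne'
    linear_combination (-∑ y, R x y * S x y) * h2
  -- moment matching dotted with θ
  have hdot : ∀ (R : X → α → ℝ),
      ∑ x, wsrc x * ∑ y, R x y * S x y
        = ∑ j, θ j * ((∑ x, wsrc x • ∑ y, R x y • φ x y) j) := by
    intro R
    simp only [Finset.sum_apply, Pi.smul_apply, smul_eq_mul, Finset.mul_sum, hS]
    conv_rhs => rw [Finset.sum_comm]
    refine Finset.sum_congr rfl fun x _ => ?_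
    rw [Finset.sum_comm]
    exact Finset.sum_congr rfl fun j _ => Finset.sum_congr rfl fun y _ => by ring
  have hmomθ : ∑ x, wsrc x * ∑ y, Q x y * S x y = ∑ x, wsrc x * ∑ y, Qθ x y * S x y := by
    rw [hdot Q, hdot Qθ, hmom]
  -- chain
  calc ∑ x, wtrg x * (-∑ y, Q x y * Real.log (Q x y))
      ≤ ∑ x, wtrg x * (-∑ y, Q x y * Real.log (Qθ x y)) := by
        refine Finset.sum_le_sum fun x _ => ?_
        refine mul_le_mul_of_nonneg_left ?_ (hwt x).le
        exact neg_le_neg (gibbs_aux (Q x) (Qθ x) (hQ0 x) (hQθpos x) (hQ1 x) (hQθ1 x))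
    _ = ∑ x, (wtrg x * Real.log (Z x) - wsrc x * ∑ y, Q x y * S x y) :=
        Finset.sum_congr rfl fun x _ => hcross Q hQ1 x
    _ = ∑ x, (wtrg x * Real.log (Z x) - wsrc x * ∑ y, Qθ x y * S x y) := by
        rw [Finset.sum_sub_distrib, Finset.sum_sub_distrib, hmomθ]
    _ = ∑ x, wtrg x * (-∑ y, Qθ x y * Real.log (Qθ x y)) :=
        (Finset.sum_congr rfl fun x _ => (hcross Qθ hQθ1 x)).symm
end
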